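/- arXiv:2205.07447 — 11 statements merged into one kernel-verified Lean document; each statement's English description precedes it below -/
import Mathlib

section
/- Let G be a (P2+P3, complement-of-(P2+P3))-free graph containing an induced 4-cycle C with vertices v1,v2,v3,v4 in cyclic order. Then no vertex outside the cycle is adjacent to exactly three vertices of the cycle. -/
open SimpleGraph

/-- `P2 + P3`: disjoint union of a 2-vertex path and a 3-vertex path. -/
def p2p3 : SimpleGraph (Fin 5) :=
  SimpleGraph.fromRel fun a b =>
    (a = 0 ∧ b = 1) ∨ (a = 2 ∧ b = 3) ∨ (a = 3 ∧ b = 4)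

/-- `G` contains no induced copy of `H`. -/
def InducedFree {α β : Type*} (H : SimpleGraph α) (G : SimpleGraph β) : Prop :=
  ¬ ∃ f : α ↪ β, ∀ a b, H.Adj a b ↔ G.Adj (f a) (f b)

/-- `s` is a stable (independent) set in `G`. -/
def StableSet {V : Type*} (G : SimpleGraph V) (s : Set V) : Prop :=
  s.Pairwise fun a b => ¬ G.Adj a b

/-- `v 0, v 1, v 2, v 3` are the vertices, in cyclic order, of an induced 4-cycle in `G`. -/
def InducedC4 {V : Type*} (G : SimpleGraph V) (v : Fin 4 → V) : Prop :=
  Function.Injective v ∧ (∀ i : Fin 4, G.Adj (v i) (v (i + 1))) ∧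
    ¬ G.Adj (v 0) (v 2) ∧ ¬ G.Adj (v 1) (v 3)

lemma three_of_four (s : Set (Fin 4)) (h : s.ncard = 3) :
    ∃ i, i ∉ s ∧ ∀ j, j ≠ i → j ∈ s := by
  classical
  have hf : s.toFinset.card = 3 := by
    rw [Set.ncard_eq_toFinset_card'] at h; exact h
  have hc : s.toFinsetᶜ.card = 1 := by
    have := Finset.card_compl s.toFinset
    simp only [hf, Fintype.card_fin] at this
    omega
  obtain ⟨i, hi⟩ := Finset.card_eq_one.mp hc
  refine ⟨i, ?_, ?_⟩
  · have : i ∈ s.toFinsetᶜ := hi ▸ Finset.mem_singleton_self i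
    simpa using this
  · intro j hj
    have : j ∉ s.toFinsetᶜ := by
      rw [hi]; simpa using hj
    simpa using this

lemma key {V : Type*} (G : SimpleGraph V) (h2 : InducedFree p2p3ᶜ G)
    (x a b c d : V)
    (hab : G.Adj a b) (hbc : G.Adj b c) (hcd : G.Adj c d) (hda : G.Adj d a)
    (hac : ¬ G.Adj a c) (hbd : ¬ G.Adj b d)
    (hxa : G.Adj x a) (hxb : G.Adj x b) (hxc : G.Adj x c) (hxd : ¬ G.Adj x d)
    (nac : a ≠ c) (nbd : b ≠ d)
    (nxa : x ≠ a) (nxb : x ≠ b) (nxc : x ≠ c) (nxd : x ≠ d) : False := by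
  apply h2
  have nab : a ≠ b := hab.ne
  have nbc : b ≠ c := hbc.ne
  have ncd : c ≠ d := hcd.ne
  have nad : a ≠ d := hda.ne'
  refine ⟨⟨![a, c, x, d, b], ?_⟩, ?_⟩
  · intro p q hpq
    fin_cases p <;> fin_cases q <;>
      simp_all [Matrix.cons_val_zero, Matrix.cons_val_one] <;>
      first
        | rfl
        | (exfalso; first
            | exact nac hpq | exact nac hpq.symm
            | exact nbd hpq | exact nbd hpq.symm
            | exact nxa hpq | exact nxa hpq.symm
            | exact nxb hpq | exact nxb hpq.symm
            | exact nxc hpq | exact nxc hpq.symm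
            | exact nxd hpq | exact nxd hpq.symm
            | exact nab hpq | exact nab hpq.symm
            | exact nbc hpq | exact nbc hpq.symm
            | exact ncd hpq | exact ncd hpq.symm
            | exact nad hpq | exact nad hpq.symm)
  · intro p q
    fin_cases p <;> fin_cases q <;>
      simp [p2p3, compl_adj, fromRel_adj] <;>
      first
        | exact fun h => (h rfl).elim
        | exact hxa | exact hxa.symm
        | exact hxb | exact hxb.symm
        | exact hxc | exact hxc.symm
        | exact hab | exact hab.symm
        | exact hbc | exact hbc.symm
        | exact hcd | exact hcd.symm
        | exact hda | exact hda.symm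
        | exact hac | exact fun h => hac h.symm
        | exact hbd | exact fun h => hbd h.symm
        | exact hxd | exact fun h => hxd h.symm
        | skip

theorem stmt2 {V : Type*} (G : SimpleGraph V)
    (h1 : InducedFree p2p3 G) (h2 : InducedFree p2p3ᶜ G)
    (v : Fin 4 → V) (hC : InducedC4 G v) :
    ¬ ∃ x, x ∉ Set.range v ∧ {j : Fin 4 | G.Adj x (v j)}.ncard = 3 := by
  rintro ⟨x, hxr, hcard⟩
  obtain ⟨hinj, hadj, h02, h13⟩ := hC
  obtain ⟨i, hi, hj⟩ := three_of_four _ hcard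
  have hxv : ∀ j : Fin 4, x ≠ v j := fun j h => hxr ⟨j, h.symm⟩
  have e01 : G.Adj (v 0) (v 1) := hadj 0
  have e12 : G.Adj (v 1) (v 2) := hadj 1
  have e23 : G.Adj (v 2) (v 3) := hadj 2
  have e30 : G.Adj (v 3) (v 0) := hadj 3
  have h20 : ¬ G.Adj (v 2) (v 0) := fun h => h02 h.symm
  have h31 : ¬ G.Adj (v 3) (v 1) := fun h => h13 h.symm
  have n02 : v 0 ≠ v 2 := fun h => (by simpa [h] using (hinj.ne (show (0:Fin 4) ≠ 2 by decide)) : False)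
  have n13 : v 1 ≠ v 3 := fun h => (by simpa [h] using (hinj.ne (show (1:Fin 4) ≠ 3 by decide)) : False)
  fin_cases i
  · -- x not adjacent to v 0; neighbors v1, v2, v3
    have a1 : G.Adj x (v 1) := hj 1 (by decide)
    have a2 : G.Adj x (v 2) := hj 2 (by decide)
    have a3 : G.Adj x (v 3) := hj 3 (by decide)
    exact key G h2 x (v 1) (v 2) (v 3) (v 0) e12 e23 e30 e01
      h13 h20 a1 a2 a3 hi n13 n02.symm (hxv 1) (hxv 2) (hxv 3) (hxv 0)
  · have a0 : G.Adj x (v 0) := hj 0 (by decide)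
    have a2 : G.Adj x (v 2) := hj 2 (by decide)
    have a3 : G.Adj x (v 3) := hj 3 (by decide)
    exact key G h2 x (v 2) (v 3) (v 0) (v 1) e23 e30 e01 e12
      h20 h31 a2 a3 a0 hi n02.symm n13.symm (hxv 2) (hxv 3) (hxv 0) (hxv 1)
  · have a0 : G.Adj x (v 0) := hj 0 (by decide)
    have a1 : G.Adj x (v 1) := hj 1 (by decide)
    have a3 : G.Adj x (v 3) := hj 3 (by decide)
    exact key G h2 x (v 3) (v 0) (v 1) (v 2) e30 e01 e12 e23
      h31 h02 a3 a0 a1 hi n13.symm n02 (hxv 3) (hxv 0) (hxv 1) (hxv 2)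
  · have a0 : G.Adj x (v 0) := hj 0 (by decide)
    have a1 : G.Adj x (v 1) := hj 1 (by decide)
    have a2 : G.Adj x (v 2) := hj 2 (by decide)
    exact key G h2 x (v 0) (v 1) (v 2) (v 3) e01 e12 e23 e30
      h02 h13 a0 a1 a2 hi n02 n13 (hxv 0) (hxv 1) (hxv 2) (hxv 3)
end

section
/- Let G be a (P2+P3, complement-of-(P2+P3))-free graph containing an induced 4-cycle C with vertices v1,v2,v3,v4 in cyclic order. Let D be the set of vertices complete to C (adjacent to all four cycle vertices). Then the induced subgraph G[D] is (K2+K1)-free, and consequently G[D] is perfect and χ(G[D]) = ω(G[D]) ≤ ω(G) − 2. -/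
open SimpleGraph

/-- `A_i`: vertices outside the cycle whose unique neighbour on the cycle is `v i`. -/
def vertA {V : Type*} (G : SimpleGraph V) (v : Fin 4 → V) (i : Fin 4) : Set V :=
  {x | x ∉ Set.range v ∧ ∀ j, G.Adj x (v j) ↔ j = i}

/-- `B_i`: vertices outside the cycle whose neighbours on the cycle are exactly `v i, v (i+1)`. -/
def vertB {V : Type*} (G : SimpleGraph V) (v : Fin 4 → V) (i : Fin 4) : Set V :=
  {x | x ∉ Set.range v ∧ ∀ j, G.Adj x (v j) ↔ (j = i ∨ j = i + 1)}

/-- `X_j`: vertices outside the cycle whose neighbours on the cycle are exactly `v j, v (j+2)`. -/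
def vertX {V : Type*} (G : SimpleGraph V) (v : Fin 4 → V) (j : Fin 4) : Set V :=
  {x | x ∉ Set.range v ∧ ∀ k, G.Adj x (v k) ↔ (k = j ∨ k = j + 2)}

/-- `T`: vertices outside the cycle with no neighbour on the cycle. -/
def vertT {V : Type*} (G : SimpleGraph V) (v : Fin 4 → V) : Set V :=
  {x | x ∉ Set.range v ∧ ∀ j, ¬ G.Adj x (v j)}

/-- `D`: vertices complete to the cycle. -/
def vertD {V : Type*} (G : SimpleGraph V) (v : Fin 4 → V) : Set V :=
  {x | ∀ j, G.Adj x (v j)}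

/-- `K_2 + K_1`: disjoint union of an edge and an isolated vertex. -/
def k2k1 : SimpleGraph (Fin 3) :=
  SimpleGraph.fromRel fun a b => a = 0 ∧ b = 1

/-- `G` is perfect: every induced subgraph has chromatic number equal to clique number. -/
def IsPerfect {V : Type*} (G : SimpleGraph V) : Prop :=
  ∀ s : Set V, (G.induce s).chromaticNumber = ((G.induce s).cliqueNum : ℕ∞)

lemma key_s3 {W : Type*} [Fintype W] (H : SimpleGraph W) (hfree : InducedFree k2k1 H) :
    H.chromaticNumber = (H.cliqueNum : ℕ∞) := by
  classical
  have trans : ∀ {x y z : W}, ¬ H.Adj x y → ¬ H.Adj y z → ¬ H.Adj x z := by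
    intro x y z hxy hyz hxz
    have hxy' : x ≠ y := fun h => hyz (h ▸ hxz)
    have hzy' : z ≠ y := fun h => hxy (h ▸ hxz)
    refine hfree ⟨⟨![x, z, y], ?_⟩, ?_⟩
    · intro a b hab
      fin_cases a <;> fin_cases b <;> simp_all [hxz.ne, hxz.ne.symm]
    · intro a b
      fin_cases a <;> fin_cases b <;>
        simp_all [k2k1, H.irrefl, hxz.symm, edge_adj] <;> tauto
  let s : Setoid W := ⟨fun x y => ¬ H.Adj x y,
    ⟨fun x => H.irrefl, fun h hadj => h hadj.symm, fun h1 h2 => trans h1 h2⟩⟩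
  haveI : DecidableEq (Quotient s) := Classical.decEq _
  let C : H.Coloring (Quotient s) := Coloring.mk (Quotient.mk s) (by
    intro a b hab heq
    exact (Quotient.eq.mp heq) hab)
  haveI : Fintype (Quotient s) := Fintype.ofFinite _
  let t : Finset W := Finset.univ.image (Quotient.out : Quotient s → W)
  have htcard : t.card = Fintype.card (Quotient s) := by
    rw [Finset.card_image_of_injective _ Quotient.out_injective, Finset.card_univ]
  have htclique : H.IsClique (t : Set W) := by
    intro a ha b hb hne
    simp only [t, Finset.coe_image, Set.mem_image] at ha hb
    obtain ⟨p, -, rfl⟩ := ha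
    obtain ⟨q, -, rfl⟩ := hb
    by_contra hadj
    have : (⟦p.out⟧ : Quotient s) = ⟦q.out⟧ := Quotient.sound hadj
    rw [Quotient.out_eq, Quotient.out_eq] at this
    exact hne (this ▸ rfl)
  have h1 : H.chromaticNumber ≤ (H.cliqueNum : ℕ∞) := by
    refine (C.colorable.mono ?_).chromaticNumber_le
    rw [← htcard]
    exact htclique.card_le_cliqueNum
  have h2 : (H.cliqueNum : ℕ∞) ≤ H.chromaticNumber := by
    obtain ⟨u, hu⟩ := H.exists_isNClique_cliqueNum
    rw [← hu.card_eq]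
    exact hu.isClique.card_le_chromaticNumber
  exact le_antisymm h1 h2

lemma free_induce {W : Type*} {H : SimpleGraph W} (h : InducedFree k2k1 H) (s : Set W) :
    InducedFree k2k1 (H.induce s) := by
  rintro ⟨f, hf⟩
  exact h ⟨f.trans (Function.Embedding.subtype _), fun a b => hf a b⟩

set_option maxHeartbeats 1600000 in
theorem stmt3 {V : Type*} [Fintype V] (G : SimpleGraph V)
    (h1 : InducedFree p2p3 G) (h2 : InducedFree p2p3ᶜ G)
    (v : Fin 4 → V) (hC : InducedC4 G v) :
    InducedFree k2k1 (G.induce (vertD G v)) ∧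
    IsPerfect (G.induce (vertD G v)) ∧
    (G.induce (vertD G v)).chromaticNumber = ((G.induce (vertD G v)).cliqueNum : ℕ∞) ∧
    (G.induce (vertD G v)).cliqueNum ≤ G.cliqueNum - 2 := by
  classical
  obtain ⟨hinj, hadj, h02, h13⟩ := hC
  have hfree : InducedFree k2k1 (G.induce (vertD G v)) := by
    rintro ⟨f, hf⟩
    set x := f 0 with hx
    set y := f 1 with hy
    set z := f 2 with hz
    have hxy : G.Adj x.1 y.1 := (hf 0 1).mp (by
      simp only [k2k1, fromRel_adj]; decide)
    have hxz : ¬ G.Adj x.1 z.1 := fun h => by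
      have := (hf 0 2).mpr h
      rw [k2k1, fromRel_adj] at this
      revert this; decide
    have hyz : ¬ G.Adj y.1 z.1 := fun h => by
      have := (hf 1 2).mpr h
      rw [k2k1, fromRel_adj] at this
      revert this; decide
    have hxD : ∀ j, G.Adj x.1 (v j) := x.2
    have hyD : ∀ j, G.Adj y.1 (v j) := y.2
    have hzD : ∀ j, G.Adj z.1 (v j) := z.2
    -- distinctness
    have hv02 : v 0 ≠ v 2 := fun h => absurd (hinj h) (by decide)
    have hxz' : x.1 ≠ z.1 := fun h =>
      absurd (f.injective (Subtype.coe_injective h)) (by decide)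
    have hyz' : y.1 ≠ z.1 := fun h =>
      absurd (f.injective (Subtype.coe_injective h)) (by decide)
    refine h2 ⟨⟨![v 0, v 2, x.1, z.1, y.1], ?_⟩, ?_⟩
    · intro a b hab
      have n1 : v 0 ≠ x.1 := fun h => G.irrefl (h ▸ hxD 0).symm
      have n2 : v 0 ≠ z.1 := fun h => G.irrefl (h ▸ hzD 0).symm
      have n3 : v 0 ≠ y.1 := fun h => G.irrefl (h ▸ hyD 0).symm
      have n4 : v 2 ≠ x.1 := fun h => G.irrefl (h ▸ hxD 2).symm
      have n5 : v 2 ≠ z.1 := fun h => G.irrefl (h ▸ hzD 2).symm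
      have n6 : v 2 ≠ y.1 := fun h => G.irrefl (h ▸ hyD 2).symm
      fin_cases a <;> fin_cases b <;> simp_all [hxy.ne]
    · intro a b
      have e1 : G.Adj (v 0) x.1 := (hxD 0).symm
      have e2 : G.Adj (v 0) z.1 := (hzD 0).symm
      have e3 : G.Adj (v 0) y.1 := (hyD 0).symm
      have e4 : G.Adj (v 2) x.1 := (hxD 2).symm
      have e5 : G.Adj (v 2) z.1 := (hzD 2).symm
      have e6 : G.Adj (v 2) y.1 := (hyD 2).symm
      have hzx : ¬ G.Adj z.1 x.1 := fun h => hxz h.symm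
      have hzy : ¬ G.Adj z.1 y.1 := fun h => hyz h.symm
      have hyx : G.Adj y.1 x.1 := hxy.symm
      have hv20 : ¬ G.Adj (v 2) (v 0) := fun h => h02 h.symm
      fin_cases a <;> fin_cases b <;>
        simp_all [p2p3, compl_adj, fromRel_adj] <;> tauto
  haveI : Fintype ↥(vertD G v) := Fintype.ofFinite _
  have hperf : IsPerfect (G.induce (vertD G v)) := by
    intro s
    haveI : Fintype ↥s := Fintype.ofFinite _
    exact key_s3 _ (free_induce hfree s)
  have hchrom := key_s3 _ hfree
  refine ⟨hfree, hperf, hchrom, ?_⟩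
  -- clique number bound
  obtain ⟨u, hu⟩ := (G.induce (vertD G v)).exists_isNClique_cliqueNum
  have hv01 : v 0 ≠ v 1 := fun h => absurd (hinj h) (by decide)
  set w : Finset V := u.image Subtype.val with hw
  have hwcard : w.card = (G.induce (vertD G v)).cliqueNum := by
    rw [hw, Finset.card_image_of_injective _ Subtype.coe_injective, hu.card_eq]
  have hwD : ∀ a ∈ w, a ∈ vertD G v := by
    intro a ha
    simp only [hw, Finset.mem_image] at ha
    obtain ⟨b, -, rfl⟩ := ha
    exact b.2
  have hwcl : G.IsClique (w : Set V) := by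
    intro a ha b hb hne
    simp only [hw, Finset.coe_image, Set.mem_image] at ha hb
    obtain ⟨a', ha', rfl⟩ := ha
    obtain ⟨b', hb', rfl⟩ := hb
    exact hu.isClique ha' hb' (fun h => hne (congrArg Subtype.val h))
  have h0w : v 0 ∉ w := fun h => G.irrefl (hwD _ h 0)
  have h1w : v 1 ∉ w := fun h => G.irrefl (hwD _ h 1)
  have hadj01 : G.Adj (v 0) (v 1) := by simpa using hadj 0
  set t' : Finset V := insert (v 0) (insert (v 1) w) with ht'
  have hbig : G.IsClique (t' : Set V) := by
    rw [ht']
    push_cast [Finset.coe_insert]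
    refine SimpleGraph.IsClique.insert (SimpleGraph.IsClique.insert hwcl ?_) ?_
    · intro b hb hne
      exact (hwD b hb 1).symm
    · intro b hb hne
      rcases hb with rfl | hb
      · exact hadj01
      · exact (hwD b hb 0).symm
  have hcard : t'.card = w.card + 2 := by
    rw [ht', Finset.card_insert_of_notMem (by
        simp only [Finset.mem_insert]
        rintro (h | h)
        · exact hv01 h
        · exact h0w h),
      Finset.card_insert_of_notMem h1w]
  have hle : t'.card ≤ G.cliqueNum := IsClique.card_le_cliqueNum (tc := hbig)
  omega
end

section
/- Let G be a (P2+P3, complement-of-(P2+P3))-free graph containing an induced 4-cycle C with vertices v1,v2,v3,v4 in cyclic order. Let D be the set of vertices complete to C and, for j in {1,2}, let X_j = {v : N(v) ∩ C = {v_j, v_{j+2}}} and X = X_1 ∪ X_2. Then X is complete to D, i.e., every vertex of X is adjacent to every vertex of D. -/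
open SimpleGraph

/-- If `a,b,c,d,e` induce the complement of `P2+P3` (non-edges `ab`, `cd`, `de`;
all other pairs edges), we contradict `(p2p3ᶜ)`-freeness. -/
lemma key5 {V : Type*} (G : SimpleGraph V) (h2 : InducedFree p2p3ᶜ G)
    (a b c d e : V)
    (hab : ¬ G.Adj a b) (hcd : ¬ G.Adj c d) (hde : ¬ G.Adj d e)
    (hac : G.Adj a c) (had : G.Adj a d) (hae : G.Adj a e)
    (hbc : G.Adj b c) (hbd : G.Adj b d) (hbe : G.Adj b e)
    (hce : G.Adj c e)
    (hab' : a ≠ b) (hcd' : c ≠ d) (hde' : d ≠ e) : False := by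
  have hba : ¬ G.Adj b a := fun h => hab h.symm
  have hdc : ¬ G.Adj d c := fun h => hcd h.symm
  have hed : ¬ G.Adj e d := fun h => hde h.symm
  apply h2
  have hinj : Function.Injective ![a, b, c, d, e] := by
    intro i j hij
    fin_cases i <;> fin_cases j <;> simp at hij ⊢ <;>
      first
      | rfl
      | exact absurd hij hab' | exact absurd hij.symm hab'
      | exact absurd hij hcd' | exact absurd hij.symm hcd'
      | exact absurd hij hde' | exact absurd hij.symm hde'
      | exact absurd hij hac.ne | exact absurd hij.symm hac.ne
      | exact absurd hij had.ne | exact absurd hij.symm had.ne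
      | exact absurd hij hae.ne | exact absurd hij.symm hae.ne
      | exact absurd hij hbc.ne | exact absurd hij.symm hbc.ne
      | exact absurd hij hbd.ne | exact absurd hij.symm hbd.ne
      | exact absurd hij hbe.ne | exact absurd hij.symm hbe.ne
      | exact absurd hij hce.ne | exact absurd hij.symm hce.ne
  refine ⟨⟨![a, b, c, d, e], hinj⟩, ?_⟩
  intro i j
  fin_cases i <;> fin_cases j <;>
    simp [p2p3, compl_adj, fromRel_adj, G.irrefl, hab, hba, hcd, hdc, hde, hed,
      hac, had, hae, hbc, hbd, hbe, hce,
      hac.symm, had.symm, hae.symm, hbc.symm, hbd.symm, hbe.symm, hce.symm]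

theorem stmt4 {V : Type*} (G : SimpleGraph V)
    (h1 : InducedFree p2p3 G) (h2 : InducedFree p2p3ᶜ G)
    (v : Fin 4 → V) (hC : InducedC4 G v) :
    ∀ x ∈ vertX G v 0 ∪ vertX G v 1, ∀ d ∈ vertD G v, G.Adj x d := by
  obtain ⟨hinj, hadj, h02, h13⟩ := hC
  intro x hx d hd
  by_contra hxd
  rcases hx with hx | hx
  · -- x ∈ X_0 : pattern on (v0, v2, d, x, v1)
    exact key5 G h2 (v 0) (v 2) d x (v 1)
      h02 (fun h => hxd h.symm) (fun h => by simpa using (hx.2 1).1 h)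
      (hd 0).symm ((hx.2 0).2 (Or.inl rfl)).symm (hadj 0)
      (hd 2).symm ((hx.2 2).2 (Or.inr rfl)).symm ((hadj 1)).symm
      (hd 1)
      (fun h => absurd (hinj h) (by decide))
      (fun h => by simpa using (hx.2 1).1 (h ▸ hd 1))
      (fun h => hx.1 ⟨1, h.symm⟩)
  · -- x ∈ X_1 : pattern on (v1, v3, d, x, v2)
    exact key5 G h2 (v 1) (v 3) d x (v 2)
      h13 (fun h => hxd h.symm) (fun h => by simpa using (hx.2 2).1 h)
      (hd 1).symm ((hx.2 1).2 (Or.inl rfl)).symm (hadj 1)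
      (hd 3).symm ((hx.2 3).2 (Or.inr rfl)).symm ((hadj 2)).symm
      (hd 2)
      (fun h => absurd (hinj h) (by decide))
      (fun h => by simpa using (hx.2 2).1 (h ▸ hd 2))
      (fun h => hx.1 ⟨2, h.symm⟩)
end

section
/- Let G be a (P2+P3, complement-of-(P2+P3))-free graph containing an induced 4-cycle C with vertices v1,v2,v3,v4 in cyclic order. For i in {1,2,3,4}, let B_i = {v outside C : N(v) ∩ C = {v_i, v_{i+1}}} and for j in {1,2} let X_j = {v : N(v) ∩ C = {v_j, v_{j+2}}}. Then B := B_1 ∪ B_2 ∪ B_3 ∪ B_4 is anticomplete to X := X_1 ∪ X_2, i.e., there are no edges between B and X. -/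
open SimpleGraph

/-! If `b ∈ B_i` were adjacent to `x ∈ X`, then `x` sees exactly one of `v_i, v_(i+1)`, say `p`,
and the other one `q` together with the other cycle neighbour `r` of `q` gives five
vertices `q, x, p, r, b` whose only non-edges are `qx`, `pr` and `rb`: an induced complement of
`P2 + P3`. -/

theorem InducedC4.adj_iff {V : Type*} {G : SimpleGraph V} {v : Fin 4 → V} (hC : InducedC4 G v)
    (i j : Fin 4) : G.Adj (v i) (v j) ↔ j = i + 1 ∨ i = j + 1 := by
  obtain ⟨-, hcyc, h02, h13⟩ := hC
  have e01 := hcyc 0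
  have e12 := hcyc 1
  have e23 := hcyc 2
  have e30 := hcyc 3
  simp only [Fin.reduceAdd] at e01 e12 e23 e30
  fin_cases i <;> fin_cases j <;>
    simp [e01, e12, e23, e30, e01.symm, e12.symm, e23.symm, e30.symm, h02, h13,
      G.adj_comm (v 2) (v 0), G.adj_comm (v 3) (v 1)]

theorem not_adj_of_inducedFree_compl_p2p3 {V : Type*} {G : SimpleGraph V}
    (h : InducedFree p2p3ᶜ G) {p q r b x : V} (hqx : q ≠ x) (hpr : p ≠ r)
    (hpq : G.Adj p q) (hqr : G.Adj q r) (hbp : G.Adj b p) (hbq : G.Adj b q)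
    (hxp : G.Adj x p) (hxr : G.Adj x r)
    (hnpr : ¬ G.Adj p r) (hnxq : ¬ G.Adj x q) (hnbr : ¬ G.Adj b r) : ¬ G.Adj b x := by
  intro hbx
  have hrb : r ≠ b := fun e => hnpr (e ▸ hbp.symm)
  have hinj : Function.Injective ![q, x, p, r, b] := by
    intro a c hac
    fin_cases a <;> fin_cases c <;>
      simp [hqx, hpr, hrb, hpq.ne, hqr.ne, hbp.ne, hbq.ne, hxp.ne, hxr.ne, hbx.ne, hqx.symm,
        hpr.symm, hrb.symm, hpq.ne', hqr.ne', hbp.ne', hbq.ne', hxp.ne', hxr.ne', hbx.ne'] at hac ⊢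
  refine h ⟨⟨_, hinj⟩, fun a c => ?_⟩
  fin_cases a <;> fin_cases c <;>
    simp [p2p3, hpq, hqr, hbp, hbq, hxp, hxr, hbx, hpq.symm, hqr.symm, hbp.symm, hbq.symm,
      hxp.symm, hxr.symm, hbx.symm, hnpr, hnxq, hnbr, G.adj_comm q x, G.adj_comm r p,
      G.adj_comm r b]

theorem stmt5_general {V : Type*} (G : SimpleGraph V)
    (h2 : InducedFree p2p3ᶜ G)
    (v : Fin 4 → V) (hC : InducedC4 G v) :
    ∀ b ∈ (⋃ i : Fin 4, vertB G v i), ∀ x ∈ vertX G v 0 ∪ vertX G v 1, ¬ G.Adj b x := by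
  intro b hb x hx
  obtain ⟨i, -, hb⟩ := Set.mem_iUnion.1 hb
  obtain ⟨j, hxC, hx⟩ : ∃ j, x ∈ vertX G v j := hx.elim (⟨0, ·⟩) (⟨1, ·⟩)
  have hcyc := hC.adj_iff
  have hvx : ∀ k, v k ≠ x := fun k e => hxC ⟨k, e⟩
  by_cases hxi : G.Adj x (v i)
  · apply not_adj_of_inducedFree_compl_p2p3 h2 (p := v i) (q := v (i + 1)) (r := v (i + 2)) <;>
      grind [hC.1.ne_iff]
  · apply not_adj_of_inducedFree_compl_p2p3 h2 (p := v (i + 1)) (q := v i) (r := v (i + 3)) <;>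
      grind [hC.1.ne_iff]

theorem stmt5 {V : Type*} (G : SimpleGraph V)
    (h1 : InducedFree p2p3 G) (h2 : InducedFree p2p3ᶜ G)
    (v : Fin 4 → V) (hC : InducedC4 G v) :
    ∀ b ∈ (⋃ i : Fin 4, vertB G v i), ∀ x ∈ vertX G v 0 ∪ vertX G v 1, ¬ G.Adj b x :=
  stmt5_general G h2 v hC
end

section
/- Let G be a (P2+P3, complement-of-(P2+P3))-free graph containing an induced 4-cycle C with vertices v1,v2,v3,v4 in cyclic order. For i in {1,2,3,4} let A_i = {v outside C : N(v) ∩ C = {v_i}} and B_i = {v outside C : N(v) ∩ C = {v_i, v_{i+1}}}. Then any vertex in A_i ∪ B_i has at most one nonneighbor in A_{i+2} ∪ B_{i+1}. -/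
open SimpleGraph

lemma buildP2P3 {V : Type*} (G : SimpleGraph V) (h1 : InducedFree p2p3 G)
    (a b c d e : V)
    (hab : G.Adj a b) (hcd : G.Adj c d) (hde : G.Adj d e)
    (hac : ¬ G.Adj a c) (had : ¬ G.Adj a d) (hae : ¬ G.Adj a e)
    (hbc : ¬ G.Adj b c) (hbd : ¬ G.Adj b d) (hbe : ¬ G.Adj b e)
    (hce : ¬ G.Adj c e) (hce' : c ≠ e) : False := by
  have nab : a ≠ b := hab.ne
  have ncd : c ≠ d := hcd.ne
  have nde : d ≠ e := hde.ne
  have nac : a ≠ c := fun h => hbc (h ▸ hab).symm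
  have nad : a ≠ d := fun h => hbd (h ▸ hab).symm
  have nae : a ≠ e := fun h => hbe (h ▸ hab).symm
  have nbc : b ≠ c := fun h => hac (h ▸ hab)
  have nbd : b ≠ d := fun h => had (h ▸ hab)
  have nbe : b ≠ e := fun h => hae (h ▸ hab)
  have sab := hab.symm
  have scd := hcd.symm
  have sde := hde.symm
  have sac : ¬ G.Adj c a := fun h => hac h.symm
  have sad : ¬ G.Adj d a := fun h => had h.symm
  have sae : ¬ G.Adj e a := fun h => hae h.symm
  have sbc : ¬ G.Adj c b := fun h => hbc h.symm
  have sbd : ¬ G.Adj d b := fun h => hbd h.symm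
  have sbe : ¬ G.Adj e b := fun h => hbe h.symm
  have sce : ¬ G.Adj e c := fun h => hce h.symm
  have inj : Function.Injective ![a, b, c, d, e] := by
    intro x y hxy
    fin_cases x <;> fin_cases y <;> simp_all
  exact h1 ⟨⟨![a, b, c, d, e], inj⟩, by
    intro x y
    fin_cases x <;> fin_cases y <;>
      simp_all [p2p3, SimpleGraph.fromRel_adj, G.irrefl]⟩

theorem stmt6 {V : Type*} (G : SimpleGraph V)
    (h1 : InducedFree p2p3 G) (h2 : InducedFree p2p3ᶜ G)
    (v : Fin 4 → V) (hC : InducedC4 G v) (i : Fin 4) :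
    ∀ p ∈ vertA G v i ∪ vertB G v i,
      ∀ q ∈ vertA G v (i + 2) ∪ vertB G v (i + 1),
        ∀ r ∈ vertA G v (i + 2) ∪ vertB G v (i + 1),
          q ≠ p → ¬ G.Adj p q → r ≠ p → ¬ G.Adj p r → q = r := by
  intro p hp q hq r hr hqp hpq hrp hpr
  by_contra hqr
  obtain ⟨hvinj, hcyc, h02, h13⟩ := hC
  -- Fin 4 arithmetic facts
  have e31 : ∀ j : Fin 4, j + 3 + 1 = j := by decide
  have e11 : ∀ j : Fin 4, j + 1 + 1 = j + 2 := by decide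
  have d20 : ∀ j : Fin 4, j + 2 ≠ j := by decide
  have d21 : ∀ j : Fin 4, j + 2 ≠ j + 1 := by decide
  have d30 : ∀ j : Fin 4, j + 3 ≠ j := by decide
  have d31 : ∀ j : Fin 4, j + 3 ≠ j + 1 := by decide
  have d32 : ∀ j : Fin 4, j + 3 ≠ j + 2 := by decide
  have d01 : ∀ j : Fin 4, j ≠ j + 1 := by decide
  -- cycle facts
  have cyc1 : G.Adj (v i) (v (i + 3)) := by
    have := hcyc (i + 3); rw [e31 i] at this; exact this.symm
  have cyc2 : ¬ G.Adj (v i) (v (i + 2)) := by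
    fin_cases i
    · exact h02
    · exact h13
    · exact fun h => h02 h.symm
    · exact fun h => h13 h.symm
  -- facts about p
  have hpfacts : p ∉ Set.range v ∧ G.Adj p (v i) ∧ ¬ G.Adj p (v (i + 2)) ∧
      ¬ G.Adj p (v (i + 3)) := by
    rcases hp with ⟨h0, h⟩ | ⟨h0, h⟩
    · exact ⟨h0, (h i).mpr rfl, fun hh => d20 i ((h _).mp hh),
        fun hh => d30 i ((h _).mp hh)⟩
    · exact ⟨h0, (h i).mpr (Or.inl rfl),
        fun hh => ((h _).mp hh).elim (d20 i) (d21 i),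
        fun hh => ((h _).mp hh).elim (d30 i) (d31 i)⟩
  obtain ⟨hpR, hpvi, hpv2, hpv3⟩ := hpfacts
  -- facts about q and r
  have hqrfacts : ∀ x ∈ vertA G v (i + 2) ∪ vertB G v (i + 1),
      x ∉ Set.range v ∧ G.Adj x (v (i + 2)) ∧ ¬ G.Adj x (v i) ∧
      ¬ G.Adj x (v (i + 3)) := by
    rintro x (⟨h0, h⟩ | ⟨h0, h⟩)
    · exact ⟨h0, (h _).mpr rfl, fun hh => d20 i ((h _).mp hh).symm,
        fun hh => d32 i ((h _).mp hh)⟩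
    · refine ⟨h0, (h _).mpr (Or.inr (e11 i).symm), ?_, ?_⟩
      · intro hh
        rcases (h _).mp hh with hh' | hh'
        · exact d01 i hh'
        · rw [e11 i] at hh'; exact d20 i hh'.symm
      · intro hh
        rcases (h _).mp hh with hh' | hh'
        · exact d31 i hh'
        · rw [e11 i] at hh'; exact d32 i hh'
  obtain ⟨hqR, hqv2, hqvi, hqv3⟩ := hqrfacts q hq
  obtain ⟨hrR, hrv2, hrvi, hrv3⟩ := hqrfacts r hr
  by_cases hA : G.Adj q r
  · -- P2 = {q, r}, P3 = p - v i - v (i+3)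
    exact buildP2P3 G h1 q r p (v i) (v (i + 3)) hA hpvi cyc1
      (fun h => hpq h.symm) hqvi hqv3
      (fun h => hpr h.symm) hrvi hrv3
      hpv3 (fun h => hpR ⟨i + 3, h.symm⟩)
  · -- P2 = {p, v i}, P3 = q - v (i+2) - r
    exact buildP2P3 G h1 p (v i) q (v (i + 2)) r hpvi hqv2 hrv2.symm
      hpq hpv2 hpr
      (fun h => hqvi h.symm) cyc2 (fun h => hrvi h.symm)
      hA hqr
end

section
/- Let G be a (P2+P3, complement-of-(P2+P3))-free graph containing an induced 4-cycle C with vertices v1,v2,v3,v4 in cyclic order. Let D be the set of vertices complete to C, and for i in {1,2,3,4} let A_i, B_i, T be as usual (A_i: neighbors on C exactly {v_i}; B_i: exactly {v_i,v_{i+1}}; T: no neighbors on C). Then for any vertex p ∈ A_i ∪ B_i ∪ T, the set N(p) ∩ (D ∪ B_{i+2}) is a clique. -/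
open SimpleGraph

/- Two non-adjacent vertices `x, y` with common neighbours `a, b, p`, where `a b` is an edge and
`p` sees neither `a` nor `b`, induce the complement of `P2 + P3` on `{x, y, a, p, b}`. Every
vertex of `A_i ∪ B_i ∪ T` misses both ends of the edge `v (i+2) v (i+3)`, and every vertex of
`D ∪ B_{i+2}` sees both. -/

section Neighbourhoods

variable {V : Type*} {G : SimpleGraph V} {v : Fin 4 → V}

theorem not_adj_of_mem_vertA_union_vertB_union_vertT {i : Fin 4} {p : V}
    (hp : p ∈ vertA G v i ∪ vertB G v i ∪ vertT G v) :
    ¬ G.Adj p (v (i + 2)) ∧ ¬ G.Adj p (v (i + 2 + 1)) := by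
  rcases hp with (⟨-, hp⟩ | ⟨-, hp⟩) | ⟨-, hp⟩ <;> simp only [hp, not_false_eq_true, and_self]
  all_goals clear hp; decide +revert

theorem adj_of_mem_vertD_union_vertB {j : Fin 4} {x : V} (hx : x ∈ vertD G v ∪ vertB G v j) :
    G.Adj x (v j) ∧ G.Adj x (v (j + 1)) := by
  rcases hx with hx | ⟨-, hx⟩
  · exact ⟨hx j, hx (j + 1)⟩
  · simp [hx]

end Neighbourhoods

theorem InducedFree.adj_of_compl_p2p3 {V : Type*} {G : SimpleGraph V}
    (hG : InducedFree p2p3ᶜ G) {x y a b p : V} (hxy : x ≠ y) (hab : G.Adj a b)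
    (hxa : G.Adj x a) (hxb : G.Adj x b) (hxp : G.Adj x p)
    (hya : G.Adj y a) (hyb : G.Adj y b) (hyp : G.Adj y p)
    (hpa : ¬ G.Adj p a) (hpb : ¬ G.Adj p b) : G.Adj x y := by
  by_contra hnxy
  have ha_ne_p : a ≠ p := fun h => hpb (h ▸ hab)
  have hp_ne_b : p ≠ b := fun h => hpa (h ▸ hab.symm)
  have hinj : Function.Injective ![x, y, a, p, b] := by
    intro s t hst
    fin_cases s <;> fin_cases t <;>
      simp_all [hxa.ne, hxb.ne, hxp.ne, hya.ne, hyb.ne, hyp.ne, hab.ne]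
  refine hG ⟨⟨_, hinj⟩, fun s t => ?_⟩
  fin_cases s <;> fin_cases t <;>
    simp [p2p3, fromRel_adj, hxa, hxb, hxp, hya, hyb, hyp, hab, hxa.symm, hxb.symm, hxp.symm,
      hya.symm, hyb.symm, hyp.symm, hab.symm, hnxy, hpa, hpb, G.adj_comm a p, G.adj_comm b p,
      G.adj_comm y x]

theorem stmt7_general {V : Type*} (G : SimpleGraph V)
    (h2 : InducedFree p2p3ᶜ G)
    (v : Fin 4 → V) (hC : InducedC4 G v) (i : Fin 4) :
    ∀ p ∈ vertA G v i ∪ vertB G v i ∪ vertT G v,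
      G.IsClique (G.neighborSet p ∩ (vertD G v ∪ vertB G v (i + 2))) := by
  intro p hp x ⟨hpx, hx⟩ y ⟨hpy, hy⟩ hxy
  obtain ⟨hpa, hpb⟩ := not_adj_of_mem_vertA_union_vertB_union_vertT hp
  obtain ⟨hxa, hxb⟩ := adj_of_mem_vertD_union_vertB hx
  obtain ⟨hya, hyb⟩ := adj_of_mem_vertD_union_vertB hy
  exact InducedFree.adj_of_compl_p2p3 h2 hxy (hC.2.1 (i + 2)) hxa hxb hpx.symm hya hyb hpy.symm
    hpa hpb

theorem stmt7 {V : Type*} (G : SimpleGraph V)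
    (h1 : InducedFree p2p3 G) (h2 : InducedFree p2p3ᶜ G)
    (v : Fin 4 → V) (hC : InducedC4 G v) (i : Fin 4) :
    ∀ p ∈ vertA G v i ∪ vertB G v i ∪ vertT G v,
      G.IsClique (G.neighborSet p ∩ (vertD G v ∪ vertB G v (i + 2))) :=
  stmt7_general G h2 v hC i
end

section
/- Let G be a (P2+P3, complement-of-(P2+P3))-free graph containing an induced 4-cycle C with vertices v1,v2,v3,v4 in cyclic order, and suppose additionally G is co-banner-free (where the co-banner is the complement of the banner, the banner being a C4 plus a pendant vertex). For i in {1,2,3,4} let A_i = {v : N(v)∩C = {v_i}} and B_i = {v : N(v)∩C = {v_i,v_{i+1}}}. Then A_i ∪ B_i is a stable set. -/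
open SimpleGraph

/-- The banner: a 4-cycle `0-1-2-3-0` plus a pendant vertex `4` adjacent only to `0`. -/
def banner : SimpleGraph (Fin 5) :=
  SimpleGraph.fromRel fun a b =>
    (a = 0 ∧ b = 1) ∨ (a = 1 ∧ b = 2) ∨ (a = 2 ∧ b = 3) ∨ (a = 3 ∧ b = 0) ∨ (a = 0 ∧ b = 4)

instance : DecidableRel banner.Adj := fun a b =>
  decidable_of_iff' _ (SimpleGraph.fromRel_adj _ a b)

instance : DecidableRel (bannerᶜ).Adj := fun a b =>
  decidable_of_iff' _ (SimpleGraph.compl_adj banner a b)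

theorem stmt8 {V : Type*} (G : SimpleGraph V)
    (h1 : InducedFree p2p3 G) (h2 : InducedFree p2p3ᶜ G)
    (h3 : InducedFree bannerᶜ G)
    (v : Fin 4 → V) (hC : InducedC4 G v) (i : Fin 4) :
    StableSet G (vertA G v i ∪ vertB G v i) := by
  have ff : ∀ j : Fin 4, j + 2 ≠ j ∧ j + 3 ≠ j ∧ j + 2 ≠ j + 1 ∧ j + 3 ≠ j + 1 ∧
      j + 2 ≠ j + 3 ∧ j + 2 + 1 = j + 3 ∧ j + 3 + 1 = j := by decide
  have key : ∀ z ∈ vertA G v i ∪ vertB G v i,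
      z ∉ Set.range v ∧ G.Adj z (v i) ∧ ¬ G.Adj z (v (i+2)) ∧ ¬ G.Adj z (v (i+3)) := by
    rintro z (⟨hr, h⟩ | ⟨hr, h⟩)
    · exact ⟨hr, (h i).mpr rfl, fun hc => (ff i).1 ((h _).mp hc),
        fun hc => (ff i).2.1 ((h _).mp hc)⟩
    · refine ⟨hr, (h i).mpr (Or.inl rfl), fun hc => ?_, fun hc => ?_⟩
      · rcases (h _).mp hc with h' | h'
        · exact (ff i).1 h'
        · exact (ff i).2.2.1 h'
      · rcases (h _).mp hc with h' | h'
        · exact (ff i).2.1 h'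
        · exact (ff i).2.2.2.1 h'
  have hop : ∀ j : Fin 4, ¬ G.Adj (v j) (v (j+2)) := by
    intro j
    fin_cases j
    · exact hC.2.2.1
    · exact hC.2.2.2
    · exact fun h => hC.2.2.1 h.symm
    · exact fun h => hC.2.2.2 h.symm
  intro x hx y hy hxy hadj
  obtain ⟨hxr, hxvi, hx2, hx3⟩ := key x hx
  obtain ⟨hyr, hyvi, hy2, hy3⟩ := key y hy
  have e1 : G.Adj (v (i+2)) (v (i+3)) := by
    have h := hC.2.1 (i+2); rwa [(ff i).2.2.2.2.2.1] at h
  have e2 : G.Adj (v (i+3)) (v i) := by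
    have h := hC.2.1 (i+3); rwa [(ff i).2.2.2.2.2.2] at h
  have n1 : ¬ G.Adj (v (i+2)) (v i) := fun h => hop i h.symm
  have dx : ∀ j, x ≠ v j := fun j h => hxr ⟨j, h.symm⟩
  have dy : ∀ j, y ≠ v j := fun j h => hyr ⟨j, h.symm⟩
  have d2 : v (i+2) ≠ v (i+3) := fun h => (ff i).2.2.2.2.1 (hC.1 h)
  have d4 : v (i+2) ≠ v i := fun h => (ff i).1 (hC.1 h)
  have d9 : v (i+3) ≠ v i := fun h => (ff i).2.1 (hC.1 h)
  apply h3
  refine ⟨⟨![v (i+2), x, v (i+3), y, v i], ?_⟩, ?_⟩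
  · intro a b hab
    fin_cases a <;> fin_cases b <;>
      first
      | rfl
      | exact absurd hab (dx _)
      | exact absurd hab (dx _).symm
      | exact absurd hab (dy _)
      | exact absurd hab (dy _).symm
      | exact absurd hab hxy
      | exact absurd hab (Ne.symm hxy)
      | exact absurd hab d2
      | exact absurd hab d2.symm
      | exact absurd hab d4
      | exact absurd hab d4.symm
      | exact absurd hab d9
      | exact absurd hab d9.symm
  · intro a b
    fin_cases a <;> fin_cases b <;>
      first
      | exact iff_of_true (by decide) hadj
      | exact iff_of_true (by decide) hadj.symm
      | exact iff_of_true (by decide) hxvi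
      | exact iff_of_true (by decide) hxvi.symm
      | exact iff_of_true (by decide) hyvi
      | exact iff_of_true (by decide) hyvi.symm
      | exact iff_of_true (by decide) e1
      | exact iff_of_true (by decide) e1.symm
      | exact iff_of_true (by decide) e2
      | exact iff_of_true (by decide) e2.symm
      | exact iff_of_false (by decide) (G.irrefl)
      | exact iff_of_false (by decide) n1
      | exact iff_of_false (by decide) (fun h => n1 h.symm)
      | exact iff_of_false (by decide) hx2
      | exact iff_of_false (by decide) (fun h => hx2 h.symm)
      | exact iff_of_false (by decide) hx3
      | exact iff_of_false (by decide) (fun h => hx3 h.symm)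
      | exact iff_of_false (by decide) hy2
      | exact iff_of_false (by decide) (fun h => hy2 h.symm)
      | exact iff_of_false (by decide) hy3
      | exact iff_of_false (by decide) (fun h => hy3 h.symm)
end

section
/- Let G be a (P2+P3, complement-of-(P2+P3), K2,3)-free graph containing an induced 4-cycle C with vertices v1,v2,v3,v4 in cyclic order. For i in {1,2,3,4} let A_i = {v : N(v)∩C = {v_i}} and B_i = {v : N(v)∩C = {v_i,v_{i+1}}}. Then any vertex in B_i has at most one neighbor in A_{i-1} ∪ B_{i+2}. -/
open SimpleGraph

lemma fin4facts : ∀ i : Fin 4, i - 1 + 1 = i ∧ i - 1 ≠ i ∧ i - 1 ≠ i + 1 ∧ i ≠ i - 1 ∧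
    i ≠ i + 2 ∧ i ≠ i + 2 + 1 ∧ i - 1 = i + 2 + 1 := by decide

set_option maxHeartbeats 2000000 in
theorem stmt10 {V : Type*} (G : SimpleGraph V)
    (h1 : InducedFree p2p3 G) (h2 : InducedFree p2p3ᶜ G)
    (h3 : InducedFree (completeBipartiteGraph (Fin 2) (Fin 3)) G)
    (v : Fin 4 → V) (hC : InducedC4 G v) (i : Fin 4) :
    ∀ p ∈ vertB G v i,
      ∀ q ∈ vertA G v (i - 1) ∪ vertB G v (i + 2),
        ∀ r ∈ vertA G v (i - 1) ∪ vertB G v (i + 2),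
          G.Adj p q → G.Adj p r → q = r := by
  obtain ⟨hinj, hcyc, h02, h13⟩ := hC
  intro p hp q hq r hr hpq hpr
  by_contra hqr_ne
  have f4 := fin4facts i
  have hab : G.Adj (v (i - 1)) (v i) := by
    have := hcyc (i - 1); rwa [f4.1] at this
  have hpb : G.Adj p (v i) := (hp.2 i).mpr (Or.inl rfl)
  have hpa : ¬ G.Adj p (v (i - 1)) := fun h => by
    rcases (hp.2 (i - 1)).mp h with h' | h'
    · exact f4.2.1 h'
    · exact f4.2.2.1 h'
  have key : ∀ x, x ∈ vertA G v (i - 1) ∪ vertB G v (i + 2) →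
      x ∉ Set.range v ∧ G.Adj x (v (i - 1)) ∧ ¬ G.Adj x (v i) := by
    rintro x (hx | hx)
    · exact ⟨hx.1, (hx.2 (i - 1)).mpr rfl, fun h => f4.2.2.2.1 ((hx.2 i).mp h)⟩
    · refine ⟨hx.1, (hx.2 (i - 1)).mpr (Or.inr f4.2.2.2.2.2.2), fun h => ?_⟩
      rcases (hx.2 i).mp h with h' | h'
      · exact f4.2.2.2.2.1 h'
      · exact f4.2.2.2.2.2.1 h'
  obtain ⟨hqR, hqa, hqb⟩ := key q hq
  obtain ⟨hrR, hra, hrb⟩ := key r hr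
  have hpR : p ∉ Set.range v := hp.1
  have npa : p ≠ v (i - 1) := fun h => hpR ⟨i - 1, h.symm⟩
  have npb : p ≠ v i := fun h => hpR ⟨i, h.symm⟩
  have nqa : q ≠ v (i - 1) := fun h => hqR ⟨i - 1, h.symm⟩
  have nqb : q ≠ v i := fun h => hqR ⟨i, h.symm⟩
  have nra : r ≠ v (i - 1) := fun h => hrR ⟨i - 1, h.symm⟩
  have nrb : r ≠ v i := fun h => hrR ⟨i, h.symm⟩
  have nab : v (i - 1) ≠ v i := fun h => f4.2.1 (hinj h)
  have npq : p ≠ q := hpq.ne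
  have npr : p ≠ r := hpr.ne
  have hpq' := hpq.symm
  have hpr' := hpr.symm
  have hpb' := hpb.symm
  have hab' := hab.symm
  have hqa' := hqa.symm
  have hra' := hra.symm
  have hpa' : ¬ G.Adj (v (i - 1)) p := fun h => hpa h.symm
  have hqb' : ¬ G.Adj (v i) q := fun h => hqb h.symm
  have hrb' : ¬ G.Adj (v i) r := fun h => hrb h.symm
  by_cases hqr : G.Adj q r
  · -- complement of P2+P3 on {p, a, q, b, r}
    have hqr' := hqr.symm
    apply h2
    have hf : Function.Injective ![p, v (i - 1), q, v i, r] := by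
      intro x y h
      fin_cases x <;> fin_cases y <;> simp_all <;>
        first
          | rfl
          | (exact absurd h (by assumption))
          | (exact absurd h (Ne.symm (by assumption)))
    refine ⟨⟨![p, v (i - 1), q, v i, r], hf⟩, fun x y => ?_⟩
    fin_cases x <;> fin_cases y <;>
      simp [p2p3, compl_adj, fromRel_adj] <;>
      first
        | assumption
        | exact G.irrefl
        | (constructor <;> assumption)
        | (intro h; exact absurd h (by assumption))
  · -- K_{2,3} on parts {p, a} and {q, r, b}
    have hqr'' : ¬ G.Adj r q := fun h => hqr h.symm
    apply h3
    have hf : Function.Injective (Sum.elim ![p, v (i - 1)] ![q, r, v i]) := by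
      rintro (x | x) (y | y) h <;>
        fin_cases x <;> fin_cases y <;> simp_all <;>
        first
          | rfl
          | (exact absurd h (by assumption))
          | (exact absurd h (Ne.symm (by assumption)))
    refine ⟨⟨Sum.elim ![p, v (i - 1)] ![q, r, v i], hf⟩, fun x y => ?_⟩
    rcases x with x | x <;> rcases y with y | y <;>
      fin_cases x <;> fin_cases y <;>
      simp <;>
      first
        | assumption
        | exact G.irrefl
        | (intro h; exact absurd h (by assumption))
end

section
/- For a fixed integer k ≥ 2, define the graph G_k on 3k vertices a_1,…,a_k, b_1,…,b_k, s_1,…,s_k as follows: {a_1,…,a_k}, {b_1,…,b_k}, {s_1,…,s_k} are each cliques; a_i is adjacent to b_j if and only if i = j; s_i is adjacent to a_j and to b_j if and only if i ≠ j; and there are no other edges. Then α(G_k) = 2 and ω(G_k) = k + 1. -/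
open SimpleGraph

/-- The stability (independence) number of `G`. -/
noncomputable def indepNum {V : Type*} (G : SimpleGraph V) : ℕ :=
  sSup {n | ∃ s : Finset V, StableSet G ↑s ∧ s.card = n}

/-- The graph `G_k` on three `k`-cliques `{a_i}`, `{b_i}`, `{s_i}`: a perfect matching
`a_i b_i` between the first two cliques, and `s_i` adjacent to `a_j`, `b_j` iff `i ≠ j`. -/
def graphGk (k : ℕ) : SimpleGraph (Fin k ⊕ Fin k ⊕ Fin k) :=
  SimpleGraph.fromRel fun x y =>
    match x, y with
    | .inl _, .inl _ => True
    | .inr (.inl _), .inr (.inl _) => True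
    | .inr (.inr _), .inr (.inr _) => True
    | .inl i, .inr (.inl j) => i = j
    | .inr (.inr i), .inl j => i ≠ j
    | .inr (.inr i), .inr (.inl j) => i ≠ j
    | _, _ => False

/-!
A stable set meets each of the three cliques at most once, and a stable `a_i, b_j, s_l` is
impossible: `a_i ≁ b_j` forces `i ≠ j`, while `s_l ≁ a_i` and `s_l ≁ b_j` force `l = i = j`.
So `α(G_k) = 2`, witnessed by `a_0, s_0`.

A clique contains at most one vertex with each index, except for a single matching edge
`a_i b_i`, because `a_i b_j` is an edge only when `i = j`. So `ω(G_k) ≤ k + 1`, with equality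
for `{a_0, b_0} ∪ {s_i | i ≠ 0}`.
-/

lemma indepNum_eq_of_card_le_of_exists {V : Type*} (G : SimpleGraph V) (n : ℕ)
    (hle : ∀ s : Finset V, StableSet G ↑s → s.card ≤ n)
    (hex : ∃ s : Finset V, StableSet G ↑s ∧ s.card = n) : _root_.indepNum G = n :=
  IsGreatest.csSup_eq ⟨hex, by rintro _ ⟨s, hs, rfl⟩; exact hle s hs⟩

lemma cliqueNum_eq_of_card_le_of_exists {V : Type*} [Finite V] (G : SimpleGraph V) (n : ℕ)
    (hle : ∀ s : Finset V, G.IsClique ↑s → s.card ≤ n)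
    (hex : ∃ s : Finset V, G.IsClique ↑s ∧ s.card = n) : G.cliqueNum = n := by
  obtain ⟨s, hs⟩ := G.exists_isNClique_cliqueNum
  obtain ⟨t, ht, rfl⟩ := hex
  exact le_antisymm (hs.card_eq ▸ hle s hs.isClique) ht.card_le_cliqueNum

lemma graphGk_stableSet_card_le_two (k : ℕ) (s : Finset (Fin k ⊕ Fin k ⊕ Fin k))
    (hs : StableSet (graphGk k) ↑s) : s.card ≤ 2 := by
  by_contra! h
  obtain ⟨x, hx, y, hy, z, hz, hxy, hxz, hyz⟩ := Finset.two_lt_card.mp h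
  have nxy := hs hx hy hxy
  have nxz := hs hx hz hxz
  have nyz := hs hy hz hyz
  rcases x with i | i | i <;> rcases y with j | j | j <;> rcases z with l | l | l <;>
    simp_all [graphGk]

lemma graphGk_exists_stableSet_card_two (k : ℕ) (hk : 0 < k) :
    ∃ s : Finset (Fin k ⊕ Fin k ⊕ Fin k), StableSet (graphGk k) ↑s ∧ s.card = 2 := by
  refine ⟨{.inl ⟨0, hk⟩, .inr (.inr ⟨0, hk⟩)}, ?_, by simp⟩
  intro x hx y hy hne
  simp only [Finset.coe_insert, Finset.coe_singleton, Set.mem_insert_iff,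
    Set.mem_singleton_iff] at hx hy
  rcases hx with rfl | rfl <;> rcases hy with rfl | rfl <;> simp_all [graphGk]

lemma graphGk_isClique_card_le (k : ℕ) (C : Finset (Fin k ⊕ Fin k ⊕ Fin k))
    (hC : (graphGk k).IsClique (C : Set (Fin k ⊕ Fin k ⊕ Fin k))) : C.card ≤ k + 1 := by
  classical
  -- `none` goes to the `b_i` whose partner `a_i` lies in `C`; a clique has at most one such `b_i`.
  let label : Fin k ⊕ Fin k ⊕ Fin k → Option (Fin k) :=
    Sum.elim some (Sum.elim (fun i => if Sum.inl i ∈ C then none else some i) some)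
  have hinj : Set.InjOn label C := by
    rintro (i | i | i) hx (j | j | j) hy h <;>
      simp only [label, Sum.elim_inl, Sum.elim_inr] at h <;> (try split_ifs at h) <;>
      simp only [Option.some_inj] at h <;> (try subst h)
    all_goals first
      | rfl
      | exact absurd hx ‹_›
      | exact absurd hy ‹_›
      | (have := hC hx hy (by simp); simp [graphGk] at this; done)
      | simpa [graphGk] using hC (Finset.mem_coe.mpr ‹Sum.inl i ∈ C›) hy (by simp)
  calc C.card ≤ (Finset.univ : Finset (Option (Fin k))).card :=
        Finset.card_le_card_of_injOn label (fun _ _ => Finset.mem_univ _) hinj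
    _ = k + 1 := by simp

lemma graphGk_exists_isClique_card (k : ℕ) (hk : 0 < k) :
    ∃ C : Finset (Fin k ⊕ Fin k ⊕ Fin k), (graphGk k).IsClique ↑C ∧ C.card = k + 1 := by
  classical
  let i₀ : Fin k := ⟨0, hk⟩
  refine ⟨insert (.inl i₀) (insert (.inr (.inl i₀))
    ((Finset.univ.erase i₀).image fun i => .inr (.inr i))), ?_, ?_⟩
  · intro x hx y hy hne
    simp only [Finset.coe_insert, Set.mem_insert_iff, Finset.mem_coe, Finset.mem_image,
      Finset.mem_erase] at hx hy
    rcases hx with rfl | rfl | ⟨i, ⟨hi, -⟩, rfl⟩ <;>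
      rcases hy with rfl | rfl | ⟨j, ⟨hj, -⟩, rfl⟩ <;> simp_all [graphGk]
  · rw [Finset.card_insert_of_notMem (by simp), Finset.card_insert_of_notMem (by simp),
      Finset.card_image_of_injective _ (fun a b h => by simpa using h),
      Finset.card_erase_of_mem (Finset.mem_univ _), Finset.card_univ, Fintype.card_fin]
    omega

theorem stmt15 (k : ℕ) (hk : 2 ≤ k) :
    _root_.indepNum (graphGk k) = 2 ∧ (graphGk k).cliqueNum = k + 1 := by
  have hk₀ : 0 < k := by omega
  exact ⟨indepNum_eq_of_card_le_of_exists _ 2 (graphGk_stableSet_card_le_two k)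
      (graphGk_exists_stableSet_card_two k hk₀),
    cliqueNum_eq_of_card_le_of_exists _ (k + 1) (graphGk_isClique_card_le k)
      (graphGk_exists_isClique_card k hk₀)⟩
end

section
/- Let G be a (P2+P3, complement-of-(P2+P3))-free graph with ω(G) = 2 (triangle-free) that contains an induced K2,3. Then χ(G) ≤ 4. -/
open SimpleGraph

/-- Helper: from an explicit induced `P2 + P3` configuration we get an embedding. -/
lemma p2p3_embed_aux {V : Type*} (G : SimpleGraph V) (u w a b c : V)
    (huw : G.Adj u w) (hab : G.Adj a b) (hbc : G.Adj b c) (hac : ¬ G.Adj a c)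
    (hua : ¬ G.Adj u a) (hub : ¬ G.Adj u b) (huc : ¬ G.Adj u c)
    (hwa : ¬ G.Adj w a) (hwb : ¬ G.Adj w b) (hwc : ¬ G.Adj w c)
    (nac : a ≠ c)
    (nua : u ≠ a) (nub : u ≠ b) (nuc : u ≠ c)
    (nwa : w ≠ a) (nwb : w ≠ b) (nwc : w ≠ c) :
    ∃ f : Fin 5 ↪ V, ∀ i j, p2p3.Adj i j ↔ G.Adj (f i) (f j) := by
  have nuw : u ≠ w := huw.ne
  have nab : a ≠ b := hab.ne
  have nbc : b ≠ c := hbc.ne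
  have hinj : Function.Injective ![u, w, a, b, c] := by
    intro i j h
    fin_cases i <;> fin_cases j <;> simp_all
  refine ⟨⟨![u, w, a, b, c], hinj⟩, ?_⟩
  have hwu : G.Adj w u := huw.symm
  have hba : G.Adj b a := hab.symm
  have hcb : G.Adj c b := hbc.symm
  have hca : ¬ G.Adj c a := fun h => hac h.symm
  have hau : ¬ G.Adj a u := fun h => hua h.symm
  have hbu : ¬ G.Adj b u := fun h => hub h.symm
  have hcu : ¬ G.Adj c u := fun h => huc h.symm
  have haw : ¬ G.Adj a w := fun h => hwa h.symm
  have hbw : ¬ G.Adj b w := fun h => hwb h.symm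
  have hcw : ¬ G.Adj c w := fun h => hwc h.symm
  intro i j
  fin_cases i <;> fin_cases j <;>
    simp [p2p3, SimpleGraph.fromRel_adj] <;>
    first
      | assumption
      | exact G.irrefl
      | (constructor <;> intro h <;> simp_all)

theorem stmt18 {V : Type*} (G : SimpleGraph V)
    (h1 : InducedFree p2p3 G) (h2 : InducedFree p2p3ᶜ G)
    (hw : G.cliqueNum = 2)
    (hK : ∃ f : (Fin 2 ⊕ Fin 3) ↪ V, ∀ a b,
      (completeBipartiteGraph (Fin 2) (Fin 3)).Adj a b ↔ G.Adj (f a) (f b)) :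
    G.chromaticNumber ≤ 4 := by
  classical
  -- triangle-freeness
  have tf : ∀ x y z : V, G.Adj x y → G.Adj y z → G.Adj x z → False := by
    intro x y z hxy hyz hxz
    have h3 : G.IsNClique 3 {x, y, z} := is3Clique_triple_iff.mpr ⟨hxy, hxz, hyz⟩
    have hmem : (3 : ℕ) ∈ {n | ∃ s, G.IsNClique n s} := ⟨_, h3⟩
    simp only [SimpleGraph.cliqueNum] at hw
    by_cases hb : BddAbove {n | ∃ s, G.IsNClique n s}
    · have := le_csSup hb hmem
      omega
    · rw [csSup_of_not_bddAbove hb, csSup_empty] at hw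
      simp at hw
  -- extract an induced C4 from the K2,3
  obtain ⟨f, hf⟩ := hK
  set v0 := f (Sum.inl 0) with hv0
  set v1 := f (Sum.inr 0) with hv1
  set v2 := f (Sum.inl 1) with hv2
  set v3 := f (Sum.inr 1) with hv3
  have e01 : G.Adj v0 v1 := (hf _ _).mp (by simp)
  have e12 : G.Adj v1 v2 := (hf _ _).mp (by simp)
  have e23 : G.Adj v2 v3 := (hf _ _).mp (by simp)
  have e30 : G.Adj v3 v0 := (hf _ _).mp (by simp)
  have n02 : ¬ G.Adj v0 v2 := fun h => by simpa using (hf _ _).mpr h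
  have n13 : ¬ G.Adj v1 v3 := fun h => by simpa using (hf _ _).mpr h
  -- the coloring
  set c : V → Fin 4 := fun u =>
    if G.Adj u v0 ∨ u = v1 ∨ u = v3 then 0
    else if G.Adj u v1 then 1
    else if G.Adj u v2 then 2
    else if G.Adj u v3 then 3
    else 2 with hc
  have cls0 : ∀ x y : V, G.Adj x y → (G.Adj x v0 ∨ x = v1 ∨ x = v3) →
      (G.Adj y v0 ∨ y = v1 ∨ y = v3) → False := by
    intro x y hxy hx0 hy0
    rcases hx0 with hx0 | rfl | rfl <;> rcases hy0 with hy0 | rfl | rfl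
    · exact tf x y v0 hxy hy0 hx0
    · exact tf x v0 v1 hx0 e01 hxy
    · exact tf x v0 v3 hx0 e30.symm hxy
    · exact tf y v0 v1 hy0 e01 hxy.symm
    · exact G.irrefl hxy
    · exact n13 hxy
    · exact tf y v0 v3 hy0 e30.symm hxy.symm
    · exact n13 hxy.symm
    · exact G.irrefl hxy
  have mix2 : ∀ x y : V, G.Adj x y → ¬(G.Adj x v0 ∨ x = v1 ∨ x = v3) → ¬ G.Adj x v1 →
      G.Adj x v2 → ¬(G.Adj y v0 ∨ y = v1 ∨ y = v3) → ¬ G.Adj y v1 → ¬ G.Adj y v2 →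
      ¬ G.Adj y v3 → False := by
    intro x y hxy hx0 hx1 hx2 hy0 hy1 hy2 hy3
    push_neg at hx0 hy0
    obtain ⟨hxa0, hxn1, hxn3⟩ := hx0
    obtain ⟨hya0, hyn1, hyn3⟩ := hy0
    have hx3' : ¬ G.Adj x v3 := fun h => tf x v2 v3 hx2 e23 h
    have nxv0 : x ≠ v0 := fun h => n02 (h ▸ hx2)
    have nyv0 : y ≠ v0 := fun h => hy1 (h ▸ e01)
    have nyv1 : y ≠ v1 := fun h => hy2 (h ▸ e12)
    exact h1 (p2p3_embed_aux G x y v3 v0 v1 hxy e30 e01 (fun h => n13 h.symm)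
      hx3' hxa0 hx1 hy3 hya0 hy1 (f.injective.ne (by simp))
      hxn3 nxv0 hxn1 hyn3 nyv0 nyv1)
  have tt : ∀ x y : V, G.Adj x y → ¬(G.Adj x v0 ∨ x = v1 ∨ x = v3) → ¬ G.Adj x v1 →
      ¬ G.Adj x v2 → ¬(G.Adj y v0 ∨ y = v1 ∨ y = v3) → ¬ G.Adj y v1 → ¬ G.Adj y v2 →
      False := by
    intro x y hxy hx0 hx1 hx2 hy0 hy1 hy2
    push_neg at hx0 hy0
    obtain ⟨hxa0, hxn1, hxn3⟩ := hx0
    obtain ⟨hya0, hyn1, hyn3⟩ := hy0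
    have nxv0 : x ≠ v0 := fun h => hx1 (h ▸ e01)
    have nxv2 : x ≠ v2 := fun h => hx1 (h ▸ e12.symm)
    have nyv0 : y ≠ v0 := fun h => hy1 (h ▸ e01)
    have nyv2 : y ≠ v2 := fun h => hy1 (h ▸ e12.symm)
    exact h1 (p2p3_embed_aux G x y v0 v1 v2 hxy e01 e12 n02
      hxa0 hx1 hx2 hya0 hy1 hy2 (f.injective.ne (by simp))
      nxv0 hxn1 nxv2 nyv0 hyn1 nyv2)
  have valid : ∀ {x y : V}, G.Adj x y → c x ≠ c y := by
    intro x y hxy hcxy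
    simp only [hc] at hcxy
    by_cases hx0 : G.Adj x v0 ∨ x = v1 ∨ x = v3 <;>
      by_cases hy0 : G.Adj y v0 ∨ y = v1 ∨ y = v3 <;>
      by_cases hx1 : G.Adj x v1 <;> by_cases hy1 : G.Adj y v1 <;>
      by_cases hx2 : G.Adj x v2 <;> by_cases hy2 : G.Adj y v2 <;>
      by_cases hx3 : G.Adj x v3 <;> by_cases hy3 : G.Adj y v3 <;>
      simp only [hx0, hy0, hx1, hy1, hx2, hy2, hx3, hy3, if_true, if_false,
        eq_true_intro, not_false_iff, ite_true, ite_false, if_pos, if_neg] at hcxy <;>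
      first
        | exact absurd hcxy (by decide)
        | exact cls0 x y hxy hx0 hy0
        | exact tf x y v1 hxy hy1 hx1
        | exact tf x y v2 hxy hy2 hx2
        | exact tf x y v3 hxy hy3 hx3
        | exact mix2 x y hxy hx0 hx1 hx2 hy0 hy1 hy2 hy3
        | exact mix2 y x hxy.symm hy0 hy1 hy2 hx0 hx1 hx2 hx3
        | exact tt x y hxy hx0 hx1 hx2 hy0 hy1 hy2
  have hcol : G.Colorable 4 := ⟨SimpleGraph.Coloring.mk c valid⟩
  simpa using hcol.chromaticNumber_le
end

section
/- Let G be a (P2+P3, complement-of-(P2+P3))-free graph containing an induced 4-cycle C = v1v2v3v4. Suppose there are adjacent vertices p ∈ A_1 and q ∈ A_3 (where A_i = {v : N(v)∩C = {v_i}}). Then every vertex of D ∪ X_2 is adjacent to at least one of p, q, where D is the set of vertices complete to C and X_2 = {v : N(v)∩C = {v_2, v_4}}. -/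
/-
If `x ∈ D ∪ X₂` were adjacent to neither `p` nor `q`, then the edge `pq` together with the
path `v₁ x v₃` would be an induced `P₂ + P₃`: `p, q` have no neighbours among `v₁, v₃` and
`v₁v₃` is a non-edge of the induced cycle.
-/

open SimpleGraph

section

variable {V : Type*} {G : SimpleGraph V}

theorem not_inducedFree_p2p3_of_edge_and_path {a b c d e : V} (hab : G.Adj a b)
    (hcd : G.Adj c d) (hde : G.Adj d e) (hce : ¬ G.Adj c e) (hce_ne : c ≠ e)
    (hsep : ∀ y ∈ ({a, b} : Set V), ∀ z ∈ ({c, d, e} : Set V), ¬ G.Adj y z) :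
    ¬ InducedFree p2p3 G := by
  have hac := hsep a (by simp) c (by simp)
  have had := hsep a (by simp) d (by simp)
  have hae := hsep a (by simp) e (by simp)
  have hbc := hsep b (by simp) c (by simp)
  have hbd := hsep b (by simp) d (by simp)
  have hbe := hsep b (by simp) e (by simp)
  have hinj : Function.Injective ![a, b, c, d, e] := by
    intro i j hij
    fin_cases i <;> fin_cases j <;> simp_all [G.adj_comm]
  refine fun h ↦ h ⟨⟨![a, b, c, d, e], hinj⟩, fun i j ↦ ?_⟩
  fin_cases i <;> fin_cases j <;> simp_all [p2p3, G.adj_comm]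

theorem vertA_not_adj {v : Fin 4 → V} {i j : Fin 4} {p : V} (hp : p ∈ vertA G v i)
    (hij : j ≠ i) : ¬ G.Adj p (v j) :=
  fun h ↦ hij ((hp.2 j).1 h)

theorem adj_one_and_three_of_mem_vertD_union_vertX {v : Fin 4 → V} {x : V}
    (hx : x ∈ vertD G v ∪ vertX G v 1) : G.Adj x (v 1) ∧ G.Adj x (v 3) := by
  rcases hx with hx | hx
  · exact ⟨hx 1, hx 3⟩
  · exact ⟨(hx.2 1).2 (.inl rfl), (hx.2 3).2 (.inr rfl)⟩

end

theorem stmt19_general {V : Type*} (G : SimpleGraph V)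
    (h1 : InducedFree p2p3 G)
    (v : Fin 4 → V) (hC : InducedC4 G v)
    (p q : V) (hp : p ∈ vertA G v 0) (hq : q ∈ vertA G v 2) (hpq : G.Adj p q) :
    ∀ x ∈ vertD G v ∪ vertX G v 1, G.Adj x p ∨ G.Adj x q := by
  intro x hx
  by_contra! hxpq
  obtain ⟨hx1, hx3⟩ := adj_one_and_three_of_mem_vertD_union_vertX hx
  refine not_inducedFree_p2p3_of_edge_and_path hpq hx1.symm hx3 hC.2.2.2
    (hC.1.ne (by decide)) ?_ h1
  simp only [Set.mem_insert_iff, Set.mem_singleton_iff]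
  rintro y (rfl | rfl) z (rfl | rfl | rfl)
  · exact vertA_not_adj hp (by decide)
  · exact fun h ↦ hxpq.1 h.symm
  · exact vertA_not_adj hp (by decide)
  · exact vertA_not_adj hq (by decide)
  · exact fun h ↦ hxpq.2 h.symm
  · exact vertA_not_adj hq (by decide)

theorem stmt19 {V : Type*} (G : SimpleGraph V)
    (h1 : InducedFree p2p3 G) (h2 : InducedFree p2p3ᶜ G)
    (v : Fin 4 → V) (hC : InducedC4 G v)
    (p q : V) (hp : p ∈ vertA G v 0) (hq : q ∈ vertA G v 2) (hpq : G.Adj p q) :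
    ∀ x ∈ vertD G v ∪ vertX G v 1, G.Adj x p ∨ G.Adj x q :=
  stmt19_general G h1 v hC p q hp hq hpq
end
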